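/- For every γ ≥ 0, the vector β*(γ) = (β*_i(γ))_{i∈S} is an optimal solution of the dual program D*(γ): it is feasible (β*_i(γ) ≥ 0 for all i, and γ + Σ_{i∈sub(a)} β*_i(γ)·π(i)/π(a) ≥ c^f(a) for every a ∈ S), and it attains the minimum value of λ·Σ_{i∈S} π(i)·β_i + μ·γ over all feasible β. -/

import Mathlib

open scoped Classical
open Finset

/-- A finite tree-structured Markov chain: a finite state space partitioned into
levels `0, …, L-1`, a root `r` at level `0`, a parent map `pa` (with `pa r = r` by
convention), and transition probabilities `p i ∈ (0,1]` of being reached from the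
parent, with `p r = 1`. -/
structure TreeMC (S : Type*) [Fintype S] [DecidableEq S] where
  /-- the number of levels -/
  L : ℕ
  /-- the root -/
  r : S
  /-- the parent map (with `pa r = r` by convention) -/
  pa : S → S
  /-- the level of each state -/
  level : S → ℕ
  /-- the probability of being reached from the parent -/
  p : S → ℝ
  level_lt : ∀ i, level i < L
  level_r : level r = 0
  root_unique : ∀ i, level i = 0 → i = r
  pa_r : pa r = r
  level_pa : ∀ i, i ≠ r → level (pa i) + 1 = level i
  p_pos : ∀ i, 0 < p i
  p_le_one : ∀ i, p i ≤ 1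
  p_r : p r = 1

namespace TreeMC

variable {S : Type*} [Fintype S] [DecidableEq S] (M : TreeMC S)

/-- The ancestors of `i`: states on the path from the root to `i` (both included). -/
noncomputable def anc (i : S) : Finset S :=
  Finset.univ.filter fun a => ∃ n : ℕ, M.pa^[n] i = a

/-- The subtree of `i`: all states having `i` as an ancestor. -/
noncomputable def subt (i : S) : Finset S :=
  Finset.univ.filter fun k => i ∈ M.anc k

/-- The subtree of a set of states. -/
noncomputable def subF (X : Finset S) : Finset S :=
  Finset.univ.filter fun k => ∃ i ∈ X, k ∈ M.subt i

/-- `π i`: the probability that a job passes through state `i`. -/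
noncomputable def pi (i : S) : ℝ :=
  ∏ a ∈ M.anc i, M.p a

/-- The children of `i`. -/
noncomputable def child (i : S) : Finset S :=
  Finset.univ.filter fun k => k ≠ M.r ∧ M.pa k = i

/-- `T` is the top set of `X`: a subset of `X` whose subtree covers `X` and in which
no state lies in the subtree of a different state. -/
def IsTopSet (X T : Finset S) : Prop :=
  T ⊆ X ∧ X ⊆ M.subF T ∧ ∀ i ∈ T, ∀ k ∈ T, i ≠ k → k ∉ M.subt i

/-- Expected future cost conditional on being in state `a`. -/
noncomputable def cf (c : S → ℝ) (a : S) : ℝ :=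
  ∑ i ∈ M.subt a, c i * M.pi i / M.pi a

/-- `V` is the ski-rental value function:
`V γ i = min (γ, c i + Σ_{k ∈ child i} p k · V γ k)`. -/
def IsSkiValue (c : S → ℝ) (V : ℝ → S → ℝ) : Prop :=
  ∀ γ : ℝ, ∀ i : S, V γ i = min γ (c i + ∑ k ∈ M.child i, M.p k * V γ k)

/-- Expected future cost-to-go `V^f`. -/
noncomputable def Vf (V : ℝ → S → ℝ) (γ : ℝ) (i : S) : ℝ :=
  ∑ k ∈ M.child i, M.p k * V γ k

/-- The candidate optimal state duals `β*(γ)`. -/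
noncomputable def betaStar (c : S → ℝ) (V : ℝ → S → ℝ) (γ : ℝ) (i : S) : ℝ :=
  max 0 (c i + M.Vf V γ i - γ)

/-- Feasibility for the dual program `D*(γ)`. -/
def DualFeasible (c : S → ℝ) (γ : ℝ) (β : S → ℝ) : Prop :=
  (∀ i, 0 ≤ β i) ∧ ∀ a, M.cf c a ≤ γ + ∑ i ∈ M.subt a, β i * M.pi i / M.pi a

/-- Feasibility for the fluid LP (OriginalFluid). -/
def OrigFeasible (lam mu : ℝ) (q ν : S → ℝ) : Prop :=
  (∀ i, 0 ≤ q i) ∧ (∀ i, 0 ≤ ν i) ∧ q M.r = lam ∧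
    (∀ i, i ≠ M.r → q i = (q (M.pa i) - ν (M.pa i)) * M.p i) ∧
    (∀ i, ν i ≤ q i) ∧ ∑ i : S, ν i ≤ mu

/-- Feasibility for the fluid LP (SimplerFluid). -/
def SimpFeasible (lam mu : ℝ) (ν : S → ℝ) : Prop :=
  (∀ i, 0 ≤ ν i) ∧ (∀ i, ∑ a ∈ M.anc i, ν a * M.pi i / M.pi a ≤ lam * M.pi i) ∧
    ∑ i : S, ν i ≤ mu

end TreeMC

/-! The value function telescopes along the tree: summing
`β*_i π(i) = (c i + V^f i - V i) π(i)` over `sub(a)` leaves `Σ_{sub(a)} c π - V(a) π(a)`.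
Since `V ≤ γ` this makes `β*` feasible. For optimality, compare subtree sums top-down:
where `V(a) = γ` the telescoped sum is exactly the slack of the dual constraint at `a`, and
where `V(a) < γ` we have `β*_a = 0`, so the comparison passes to the children. -/

namespace TreeMC

variable {S : Type*} [Fintype S] [DecidableEq S] (M : TreeMC S)

section Tree

lemma mem_anc_iff {a i : S} : a ∈ M.anc i ↔ ∃ n, M.pa^[n] i = a := by
  simp [anc]

lemma mem_subt_iff_mem_anc {k a : S} : k ∈ M.subt a ↔ a ∈ M.anc k := by
  simp [subt]

lemma mem_child_iff {k a : S} : k ∈ M.child a ↔ k ≠ M.r ∧ M.pa k = a := by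
  simp [child]

lemma self_mem_anc (i : S) : i ∈ M.anc i := M.mem_anc_iff.2 ⟨0, rfl⟩

lemma level_pa_lt {i : S} (hi : i ≠ M.r) : M.level (M.pa i) < M.level i := by
  have := M.level_pa i hi; omega

lemma level_pa_le (i : S) : M.level (M.pa i) ≤ M.level i := by
  by_cases hi : i = M.r
  · rw [hi, M.pa_r]
  · exact (M.level_pa_lt hi).le

lemma level_iterate_pa_le (n : ℕ) (i : S) : M.level (M.pa^[n] i) ≤ M.level i := by
  induction n with
  | zero => rfl
  | succ n ih => exact (Function.iterate_succ_apply' M.pa n i ▸ M.level_pa_le _).trans ih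

lemma level_le_of_mem_anc {a i : S} (h : a ∈ M.anc i) : M.level a ≤ M.level i := by
  obtain ⟨n, rfl⟩ := M.mem_anc_iff.1 h
  exact M.level_iterate_pa_le n i

lemma level_child {k a : S} (hk : k ∈ M.child a) : M.level k = M.level a + 1 := by
  obtain ⟨hkr, rfl⟩ := M.mem_child_iff.1 hk
  exact (M.level_pa k hkr).symm

theorem child_induction {P : S → Prop} (h : ∀ a, (∀ k ∈ M.child a, P k) → P a) (a : S) :
    P a :=
  h a fun k hk =>
    have := M.level_child hk
    child_induction h k
termination_by M.L - M.level a
decreasing_by have := M.level_lt k; omega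

lemma anc_eq_insert {i : S} (hi : i ≠ M.r) : M.anc i = insert i (M.anc (M.pa i)) := by
  ext a
  simp only [M.mem_anc_iff, Finset.mem_insert]
  constructor
  · rintro ⟨_ | n, rfl⟩
    · exact Or.inl rfl
    · exact Or.inr ⟨n, (Function.iterate_succ_apply _ _ _).symm⟩
  · rintro (rfl | ⟨n, rfl⟩)
    · exact ⟨0, rfl⟩
    · exact ⟨n + 1, Function.iterate_succ_apply _ _ _⟩

lemma not_mem_anc_pa {i : S} (hi : i ≠ M.r) : i ∉ M.anc (M.pa i) := fun h =>
  (M.level_le_of_mem_anc h).not_gt (M.level_pa_lt hi)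

theorem root_mem_anc (i : S) : M.r ∈ M.anc i :=
  if hi : i = M.r then hi ▸ M.self_mem_anc i
  else M.anc_eq_insert hi ▸ Finset.mem_insert_of_mem (root_mem_anc (M.pa i))
termination_by M.level i
decreasing_by exact M.level_pa_lt hi

lemma subt_root : M.subt M.r = Finset.univ :=
  Finset.eq_univ_of_forall fun i => M.mem_subt_iff_mem_anc.2 (M.root_mem_anc i)

lemma mem_anc_or_mem_anc {a b j : S} (ha : a ∈ M.anc j) (hb : b ∈ M.anc j) :
    a ∈ M.anc b ∨ b ∈ M.anc a := by
  obtain ⟨n, rfl⟩ := M.mem_anc_iff.1 ha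
  obtain ⟨m, rfl⟩ := M.mem_anc_iff.1 hb
  rcases le_total n m with h | h
  · refine Or.inr (M.mem_anc_iff.2 ⟨m - n, ?_⟩)
    rw [← Function.iterate_add_apply, Nat.sub_add_cancel h]
  · refine Or.inl (M.mem_anc_iff.2 ⟨n - m, ?_⟩)
    rw [← Function.iterate_add_apply, Nat.sub_add_cancel h]

lemma eq_of_mem_anc_of_level_le {a i : S} (h : a ∈ M.anc i) (hl : M.level i ≤ M.level a) :
    a = i := by
  obtain ⟨_ | n, rfl⟩ := M.mem_anc_iff.1 h
  · rfl
  by_cases hi : i = M.r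
  · subst hi; exact Function.iterate_fixed M.pa_r _
  · have := M.level_iterate_pa_le n (M.pa i)
    rw [Function.iterate_succ_apply] at hl
    exact absurd (M.level_pa_lt hi) (by omega)

lemma mem_subt_iff_eq_or_mem_subt_child {j a : S} :
    j ∈ M.subt a ↔ j = a ∨ ∃ k ∈ M.child a, j ∈ M.subt k := by
  constructor
  · rw [M.mem_subt_iff_mem_anc, M.mem_anc_iff]
    rintro ⟨n, hn⟩
    induction n generalizing j with
    | zero => exact Or.inl hn
    | succ n ih =>
      rw [Function.iterate_succ_apply] at hn
      rcases ih hn with hja | ⟨k, hk, hjk⟩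
      · by_cases hj : j = M.r
        · left; rw [← hja, hj, M.pa_r]
        · exact Or.inr
            ⟨j, M.mem_child_iff.2 ⟨hj, hja⟩, M.mem_subt_iff_mem_anc.2 (M.self_mem_anc j)⟩
      · refine Or.inr ⟨k, hk, M.mem_subt_iff_mem_anc.2 ?_⟩
        obtain ⟨m, hm⟩ := M.mem_anc_iff.1 (M.mem_subt_iff_mem_anc.1 hjk)
        exact M.mem_anc_iff.2 ⟨m + 1, hm⟩
  · rintro (rfl | ⟨k, hk, hjk⟩)
    · exact M.mem_subt_iff_mem_anc.2 (M.self_mem_anc j)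
    · obtain ⟨m, hm⟩ := M.mem_anc_iff.1 (M.mem_subt_iff_mem_anc.1 hjk)
      obtain ⟨-, hka⟩ := M.mem_child_iff.1 hk
      refine M.mem_subt_iff_mem_anc.2 (M.mem_anc_iff.2 ⟨m + 1, ?_⟩)
      rw [Function.iterate_succ_apply', hm, hka]

lemma subt_eq_insert_biUnion (a : S) : M.subt a = insert a ((M.child a).biUnion M.subt) := by
  ext j
  rw [M.mem_subt_iff_eq_or_mem_subt_child, Finset.mem_insert, Finset.mem_biUnion]

lemma not_mem_subt_of_mem_child {a k : S} (hk : k ∈ M.child a) : a ∉ M.subt k := fun h =>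
  (M.level_le_of_mem_anc (M.mem_subt_iff_mem_anc.1 h)).not_gt (by rw [M.level_child hk]; omega)

lemma pairwiseDisjoint_subt_child (a : S) :
    (M.child a : Set S).PairwiseDisjoint M.subt := by
  intro k₁ hk₁ k₂ hk₂ hne
  refine Finset.disjoint_left.2 fun j hj₁ hj₂ => hne ?_
  have hl : M.level k₁ = M.level k₂ := by rw [M.level_child hk₁, M.level_child hk₂]
  rw [M.mem_subt_iff_mem_anc] at hj₁ hj₂
  rcases M.mem_anc_or_mem_anc hj₁ hj₂ with h | h
  · exact M.eq_of_mem_anc_of_level_le h hl.ge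
  · exact (M.eq_of_mem_anc_of_level_le h hl.le).symm

lemma sum_subt {β : Type*} [AddCommMonoid β] (f : S → β) (a : S) :
    ∑ i ∈ M.subt a, f i = f a + ∑ k ∈ M.child a, ∑ i ∈ M.subt k, f i := by
  rw [M.subt_eq_insert_biUnion, Finset.sum_insert,
    Finset.sum_biUnion (M.pairwiseDisjoint_subt_child a)]
  simpa [Finset.mem_biUnion] using fun k hk => M.not_mem_subt_of_mem_child hk

/-- Every state of `sub(a)` other than `a` is the child of exactly one state of `sub(a)`. -/
lemma sum_subt_sum_child {β : Type*} [AddCommGroup β] (f : S → β) (a : S) :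
    ∑ i ∈ M.subt a, ∑ k ∈ M.child i, f k = ∑ i ∈ M.subt a, f i - f a := by
  induction a using M.child_induction with
  | h a ih =>
    rw [M.sum_subt, Finset.sum_congr rfl ih, M.sum_subt f, Finset.sum_sub_distrib]
    abel

lemma pi_pos (i : S) : 0 < M.pi i :=
  Finset.prod_pos fun a _ => M.p_pos a

lemma pi_of_mem_child {k a : S} (hk : k ∈ M.child a) : M.pi k = M.p k * M.pi a := by
  obtain ⟨hkr, rfl⟩ := M.mem_child_iff.1 hk
  rw [pi, M.anc_eq_insert hkr, Finset.prod_insert (M.not_mem_anc_pa hkr), pi]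

end Tree

section Dual

lemma Vf_mul_pi (V : ℝ → S → ℝ) (γ : ℝ) (i : S) :
    M.Vf V γ i * M.pi i = ∑ k ∈ M.child i, V γ k * M.pi k := by
  rw [Vf, Finset.sum_mul]
  refine Finset.sum_congr rfl fun k hk => ?_
  rw [M.pi_of_mem_child hk]; ring

lemma cf_le_iff (c β : S → ℝ) (γ : ℝ) (a : S) :
    M.cf c a ≤ γ + ∑ i ∈ M.subt a, β i * M.pi i / M.pi a ↔
      ∑ i ∈ M.subt a, c i * M.pi i ≤ γ * M.pi a + ∑ i ∈ M.subt a, β i * M.pi i := by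
  have hπ := M.pi_pos a
  rw [cf, ← Finset.sum_div, ← Finset.sum_div, div_le_iff₀ hπ, add_mul,
    div_mul_cancel₀ _ hπ.ne']

variable {M} {c : S → ℝ} {V : ℝ → S → ℝ}

lemma IsSkiValue.apply_le (hV : M.IsSkiValue c V) (γ : ℝ) (i : S) : V γ i ≤ γ :=
  (hV γ i).trans_le (min_le_left _ _)

lemma IsSkiValue.betaStar_eq (hV : M.IsSkiValue c V) (γ : ℝ) (i : S) :
    M.betaStar c V γ i = c i + M.Vf V γ i - V γ i := by
  rw [betaStar, hV γ i, ← Vf]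
  rcases le_total γ (c i + M.Vf V γ i) with h | h
  · rw [min_eq_left h, max_eq_right (by linarith)]
  · rw [min_eq_right h, max_eq_left (by linarith)]; ring

lemma IsSkiValue.sum_subt_betaStar_mul_pi (hV : M.IsSkiValue c V) (γ : ℝ) (a : S) :
    ∑ i ∈ M.subt a, M.betaStar c V γ i * M.pi i =
      ∑ i ∈ M.subt a, c i * M.pi i - V γ a * M.pi a := by
  have htele := M.sum_subt_sum_child (fun k => V γ k * M.pi k) a
  simp only [← M.Vf_mul_pi] at htele
  simp only [hV.betaStar_eq, add_sub_assoc, add_mul, sub_mul, Finset.sum_add_distrib,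
    Finset.sum_sub_distrib, htele]
  ring

lemma IsSkiValue.dualFeasible_betaStar (hV : M.IsSkiValue c V) (γ : ℝ) :
    M.DualFeasible c γ (M.betaStar c V γ) := by
  refine ⟨fun i => le_max_left _ _, fun a => (M.cf_le_iff _ _ _ a).2 ?_⟩
  rw [hV.sum_subt_betaStar_mul_pi]
  nlinarith [hV.apply_le γ a, M.pi_pos a]

lemma IsSkiValue.sum_subt_betaStar_mul_pi_le (hV : M.IsSkiValue c V) {γ : ℝ} {β : S → ℝ}
    (hβ : M.DualFeasible c γ β) (a : S) :
    ∑ i ∈ M.subt a, M.betaStar c V γ i * M.pi i ≤ ∑ i ∈ M.subt a, β i * M.pi i := by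
  induction a using M.child_induction with
  | h a ih =>
    rcases le_or_gt γ (c a + M.Vf V γ a) with h | h
    · have hVa : V γ a = γ := (hV γ a).trans (min_eq_left h)
      rw [hV.sum_subt_betaStar_mul_pi, hVa]
      linarith [(M.cf_le_iff c β γ a).1 (hβ.2 a)]
    · have hβa : M.betaStar c V γ a = 0 := max_eq_left (by linarith)
      rw [M.sum_subt, M.sum_subt (fun i => β i * M.pi i), hβa, zero_mul, zero_add]
      have := mul_nonneg (hβ.1 a) (M.pi_pos a).le
      linarith [Finset.sum_le_sum ih]

end Dual

end TreeMC

theorem betaStar_optimal_dual_general {S : Type*} [Fintype S] [DecidableEq S]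
    (M : TreeMC S) (c : S → ℝ)
    (V : ℝ → S → ℝ) (hV : M.IsSkiValue c V)
    (lam mu : ℝ) (hlam0 : 0 < lam)
    (γ : ℝ) :
    M.DualFeasible c γ (M.betaStar c V γ) ∧
      ∀ β : S → ℝ, M.DualFeasible c γ β →
        lam * ∑ i : S, M.pi i * M.betaStar c V γ i + mu * γ ≤
          lam * ∑ i : S, M.pi i * β i + mu * γ := by
  refine ⟨hV.dualFeasible_betaStar γ, fun β hβ => ?_⟩
  have hroot := hV.sum_subt_betaStar_mul_pi_le hβ M.r
  simp only [M.subt_root, mul_comm _ (M.pi _)] at hroot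
  gcongr

/-- For every `γ ≥ 0`, the vector `β*(γ)` is an optimal solution of the
dual program `D*(γ)`: it is feasible, and it attains the minimum of
`λ·Σ_{i∈S} π(i)·β_i + μ·γ` over all feasible `β`. -/
theorem betaStar_optimal_dual {S : Type*} [Fintype S] [DecidableEq S]
    (M : TreeMC S) (c : S → ℝ) (hc : ∀ i, 0 < c i)
    (V : ℝ → S → ℝ) (hV : M.IsSkiValue c V)
    (lam mu : ℝ) (hlam0 : 0 < lam) (hlam1 : lam < 1) (hmu0 : 0 < mu) (hmu1 : mu ≤ 1)
    (γ : ℝ) (hγ : 0 ≤ γ) :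
    M.DualFeasible c γ (M.betaStar c V γ) ∧
      ∀ β : S → ℝ, M.DualFeasible c γ β →
        lam * ∑ i : S, M.pi i * M.betaStar c V γ i + mu * γ ≤
          lam * ∑ i : S, M.pi i * β i + mu * γ :=
  betaStar_optimal_dual_general M c V hV lam mu hlam0 γ
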